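/- In the setup below, equality κ_γ(t)²·sin²(η(t)) = w(t)⁴·κ_g(t)² holds for all t ∈ ℝ if and only if ⟨p, N(t)⟩ = 0 for all t ∈ ℝ, i.e., if and only if α is a timelike rectifying curve with respect to p. -/

import Mathlib

/-!
Write `α = cos η • p + sin η • γ`. Modulo `p` the rows `α, α', α''` are triangular combinations
of `γ, γ', γ''` with diagonal `sin η`, so `det(α, α', α'', p) = sin³η · κ_γ`. The Frenet equation
`α'' = w' T + w² (α + κ_g N)` gives instead `det(α, α', α'', p) = w³ κ_g · det(α, T, N, p)`.
Since the Minkowski metric has determinant `-1`, the Gram determinant of the orthonormal frame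
`(α, T, N)` (with `T` timelike) completed by `p` yields
`det(α, T, N, p)² = 1 - ⟨α,p⟩² + ⟨T,p⟩² - ⟨N,p⟩²`, and `⟨α,p⟩ = cos η`, `w ⟨T,p⟩ = -sin η · η'`.
Together: `sin⁴η · (κ_γ² sin²η - w⁴ κ_g²) = -(w³ κ_g ⟨p,N⟩)²`, and both sides vanish exactly
when `⟨p,N⟩ = 0`.
-/

open Real

/-- The Minkowski scalar product on `ℝ⁴₁`:
`⟨x,y⟩ = -x₁y₁ + x₂y₂ + x₃y₃ + x₄y₄`. -/
noncomputable def mdot (x y : Fin 4 → ℝ) : ℝ :=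
  -(x 0 * y 0) + x 1 * y 1 + x 2 * y 2 + x 3 * y 3

theorem Matrix.det_fin_four {R : Type*} [CommRing R] (A : Matrix (Fin 4) (Fin 4) R) :
    A.det = A 0 0 * (A 1 1 * (A 2 2 * A 3 3 - A 2 3 * A 3 2)
        - A 1 2 * (A 2 1 * A 3 3 - A 2 3 * A 3 1) + A 1 3 * (A 2 1 * A 3 2 - A 2 2 * A 3 1))
      - A 0 1 * (A 1 0 * (A 2 2 * A 3 3 - A 2 3 * A 3 2)
        - A 1 2 * (A 2 0 * A 3 3 - A 2 3 * A 3 0) + A 1 3 * (A 2 0 * A 3 2 - A 2 2 * A 3 0))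
      + A 0 2 * (A 1 0 * (A 2 1 * A 3 3 - A 2 3 * A 3 1)
        - A 1 1 * (A 2 0 * A 3 3 - A 2 3 * A 3 0) + A 1 3 * (A 2 0 * A 3 1 - A 2 1 * A 3 0))
      - A 0 3 * (A 1 0 * (A 2 1 * A 3 2 - A 2 2 * A 3 1)
        - A 1 1 * (A 2 0 * A 3 2 - A 2 2 * A 3 0) + A 1 2 * (A 2 0 * A 3 1 - A 2 1 * A 3 0)) := by
  rw [det_succ_row_zero, Fin.sum_univ_four]
  simp only [Fin.isValue, Fin.coe_ofNat_eq_mod, Nat.zero_mod, pow_zero, one_mul,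
    Fin.succAbove_zero, det_fin_three, submatrix_apply, Fin.succ_zero_eq_one, Fin.succ_one_eq_two,
    Fin.reduceSucc, Nat.one_mod, pow_one, neg_mul, Fin.succAbove, Fin.castSucc_zero, zero_lt_one,
    ↓reduceIte, Fin.castSucc_one, lt_self_iff_false, Fin.reduceCastSucc, Fin.lt_one_iff,
    Fin.reduceEq, Fin.reduceLT]
  ring

theorem mdot_comm (x y : Fin 4 → ℝ) : mdot x y = mdot y x := by
  unfold mdot; ring

theorem mdot_add_left (x y z : Fin 4 → ℝ) : mdot (x + y) z = mdot x z + mdot y z := by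
  simp only [mdot, Pi.add_apply]; ring

theorem mdot_add_right (x y z : Fin 4 → ℝ) : mdot x (y + z) = mdot x y + mdot x z := by
  simp only [mdot, Pi.add_apply]; ring

theorem mdot_smul_left (r : ℝ) (x y : Fin 4 → ℝ) : mdot (r • x) y = r * mdot x y := by
  simp only [mdot, Pi.smul_apply, smul_eq_mul]; ring

theorem mdot_smul_right (r : ℝ) (x y : Fin 4 → ℝ) : mdot x (r • y) = r * mdot x y := by
  simp only [mdot, Pi.smul_apply, smul_eq_mul]; ring

theorem HasDerivAt.mdot {f g : ℝ → Fin 4 → ℝ} {f' g' : Fin 4 → ℝ} {t : ℝ}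
    (hf : HasDerivAt f f' t) (hg : HasDerivAt g g' t) :
    HasDerivAt (fun u => _root_.mdot (f u) (g u))
      (_root_.mdot f' (g t) + _root_.mdot (f t) g') t := by
  have hf' := hasDerivAt_pi.mp hf
  have hg' := hasDerivAt_pi.mp hg
  refine (((((hf' 0).mul (hg' 0)).neg.add ((hf' 1).mul (hg' 1))).add
    ((hf' 2).mul (hg' 2))).add ((hf' 3).mul (hg' 3))).congr_deriv ?_
  simp only [_root_.mdot]; ring

theorem mdot_deriv_add_mdot_deriv_eq_zero {f g : ℝ → Fin 4 → ℝ} {c t : ℝ}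
    (hf : DifferentiableAt ℝ f t) (hg : DifferentiableAt ℝ g t)
    (h : ∀ u, mdot (f u) (g u) = c) :
    mdot (deriv f t) (g t) + mdot (f t) (deriv g t) = 0 := by
  have hd := hf.hasDerivAt.mdot hg.hasDerivAt
  simp only [h] at hd
  exact hd.unique (hasDerivAt_const t c)

theorem det_mdot_gram (v : Fin 4 → Fin 4 → ℝ) :
    (Matrix.of fun i j => mdot (v i) (v j)).det = -(Matrix.of v).det ^ 2 := by
  have hgram : Matrix.of (fun i j => mdot (v i) (v j))
      = Matrix.of v * Matrix.diagonal ![-1, 1, 1, 1] * (Matrix.of v).transpose := by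
    ext i j
    simp [Matrix.mul_apply, Fin.sum_univ_four, mdot]
  rw [hgram, Matrix.det_mul, Matrix.det_mul, Matrix.det_transpose, Matrix.det_diagonal,
    Fin.prod_univ_four]
  simp only [Matrix.cons_val_zero, Matrix.cons_val_one, Matrix.cons_val_two, Matrix.cons_val_three,
    Matrix.head_cons, Matrix.tail_cons]
  ring

theorem sq_det_of_orthonormal {x y z : Fin 4 → ℝ} (u : Fin 4 → ℝ) (hxx : mdot x x = 1)
    (hyy : mdot y y = -1) (hzz : mdot z z = 1) (hxy : mdot x y = 0) (hxz : mdot x z = 0)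
    (hyz : mdot y z = 0) :
    (Matrix.of ![x, y, z, u]).det ^ 2
      = mdot u u - mdot x u ^ 2 + mdot y u ^ 2 - mdot z u ^ 2 := by
  have h := det_mdot_gram ![x, y, z, u]
  rw [Matrix.det_fin_four] at h
  simp only [Matrix.of_apply, Matrix.cons_val_zero, Matrix.cons_val_one, Matrix.cons_val_two,
    Matrix.cons_val_three, Matrix.head_cons, Matrix.tail_cons, hxx, hyy, hzz, hxy, hxz, hyz,
    mdot_comm y x, mdot_comm z x, mdot_comm z y, mdot_comm u x, mdot_comm u y, mdot_comm u z] at h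
  linear_combination h

theorem det_of_triangular_rows {x y z p r₁ r₂ r₃ : Fin 4 → ℝ}
    {a₁ b₁ a₂ b₂ c₂ a₃ b₃ c₃ d₃ : ℝ} (h₁ : r₁ = a₁ • p + b₁ • x)
    (h₂ : r₂ = a₂ • p + b₂ • x + c₂ • y) (h₃ : r₃ = a₃ • p + b₃ • x + c₃ • y + d₃ • z) :
    (Matrix.of ![r₁, r₂, r₃, p]).det = b₁ * c₂ * d₃ * (Matrix.of ![x, y, z, p]).det := by
  subst h₁ h₂ h₃
  simp only [Matrix.det_fin_four, Matrix.of_apply, Matrix.cons_val_zero, Matrix.cons_val_one,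
    Matrix.cons_val_two, Matrix.cons_val_three, Matrix.head_cons, Matrix.tail_cons, Pi.add_apply,
    Pi.smul_apply, smul_eq_mul]
  ring

section CosSinCombination

variable {E : Type*} [NormedAddCommGroup E] [NormedSpace ℝ E] {η : ℝ → ℝ} {γ : ℝ → E}

theorem hasDerivAt_cos_smul_add_sin_smul (p : E) {t : ℝ} (hη : DifferentiableAt ℝ η t)
    (hγ : DifferentiableAt ℝ γ t) :
    HasDerivAt (fun u => cos (η u) • p + sin (η u) • γ u)
      ((-(sin (η t) * deriv η t)) • p + (cos (η t) * deriv η t) • γ t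
        + sin (η t) • deriv γ t) t := by
  have hc := (hasDerivAt_cos (η t)).comp t hη.hasDerivAt
  have hs := (hasDerivAt_sin (η t)).comp t hη.hasDerivAt
  refine ((hc.smul_const p).add (hs.smul hγ.hasDerivAt)).congr_deriv ?_
  simp only [Function.comp_apply]
  module

theorem exists_hasDerivAt_deriv_cos_smul_add_sin_smul (p : E) (hη : ContDiff ℝ 2 η)
    (hγ : ContDiff ℝ 2 γ) (t : ℝ) :
    ∃ a b c : ℝ, HasDerivAt (deriv fun u => cos (η u) • p + sin (η u) • γ u)
      (a • p + b • γ t + c • deriv γ t + sin (η t) • deriv (deriv γ) t) t := by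
  have hη₁ := hη.differentiable (by norm_num)
  have hγ₁ := hγ.differentiable (by norm_num)
  rw [funext fun u => (hasDerivAt_cos_smul_add_sin_smul p (hη₁ u) (hγ₁ u)).deriv]
  have hc := (hasDerivAt_cos (η t)).comp t (hη₁ t).hasDerivAt
  have hs := (hasDerivAt_sin (η t)).comp t (hη₁ t).hasDerivAt
  have hη₂ := (hη.differentiable_deriv_two t).hasDerivAt
  have hγ₂ := (hγ.differentiable_deriv_two t).hasDerivAt
  refine ⟨-(cos (η t) * deriv η t ^ 2 + sin (η t) * deriv (deriv η) t),
    cos (η t) * deriv (deriv η) t - sin (η t) * deriv η t ^ 2, 2 * cos (η t) * deriv η t,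
    ((((hs.mul hη₂).neg.smul_const p).add ((hc.mul hη₂).smul (hγ₁ t).hasDerivAt)).add
      (hs.smul hγ₂)).congr_deriv ?_⟩
  simp only [Function.comp_apply, Pi.mul_apply]
  module

end CosSinCombination

theorem differentiableAt_sqrt_sin_sq_sub_deriv_sq {η : ℝ → ℝ} {t : ℝ} (hη : ContDiff ℝ 2 η)
    (ht : deriv η t ^ 2 < sin (η t) ^ 2) :
    DifferentiableAt ℝ (fun u => √(sin (η u) ^ 2 - deriv η u ^ 2)) t := by
  have hη₁ : Differentiable ℝ η := hη.differentiable (by norm_num)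
  have hη₂ := hη.differentiable_deriv_two
  exact (by fun_prop : DifferentiableAt ℝ (fun u => sin (η u) ^ 2 - deriv η u ^ 2) t).sqrt
    (sub_pos.mpr ht).ne'

section CurveOverPseudoSphere

variable {p : Fin 4 → ℝ} {γ α : ℝ → Fin 4 → ℝ} {η : ℝ → ℝ}

theorem det_derivs_cos_smul_add_sin_smul (hη : ContDiff ℝ 2 η) (hγ : ContDiff ℝ 2 γ)
    (hα : ∀ u, α u = cos (η u) • p + sin (η u) • γ u) (t : ℝ) :
    (Matrix.of ![α t, deriv α t, deriv (deriv α) t, p]).det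
      = sin (η t) ^ 3 * (Matrix.of ![γ t, deriv γ t, deriv (deriv γ) t, p]).det := by
  obtain rfl : α = _ := funext hα
  obtain ⟨_, _, _, hα''⟩ := exists_hasDerivAt_deriv_cos_smul_add_sin_smul p hη hγ t
  have hα' := hasDerivAt_cos_smul_add_sin_smul p (hη.differentiable (by norm_num) t)
    (hγ.differentiable (by norm_num) t)
  rw [det_of_triangular_rows rfl hα'.deriv hα''.deriv]
  ring

theorem mdot_cos_smul_add_sin_smul (hp : mdot p p = 1) {x : Fin 4 → ℝ}
    (hx : mdot x x = 1) (hxp : mdot x p = 0) (θ : ℝ) :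
    mdot (cos θ • p + sin θ • x) (cos θ • p + sin θ • x) = 1 ∧
      mdot (cos θ • p + sin θ • x) p = cos θ := by
  simp only [mdot_add_left, mdot_add_right, mdot_smul_left, mdot_smul_right, hp, hx, hxp,
    mdot_comm p x]
  constructor
  · linear_combination sin_sq_add_cos_sq θ
  · ring

theorem mdot_unitTangent_cos_smul_add_sin_smul {T : ℝ → Fin 4 → ℝ} {w : ℝ → ℝ}
    (hp : mdot p p = 1) (hη : Differentiable ℝ η) (hγ : Differentiable ℝ γ)
    (hγ1 : ∀ u, mdot (γ u) (γ u) = 1) (hγp : ∀ u, mdot (γ u) p = 0)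
    (hγ' : ∀ u, mdot (deriv γ u) (deriv γ u) = -1)
    (hα : ∀ u, α u = cos (η u) • p + sin (η u) • γ u) {t : ℝ}
    (hw : w t ^ 2 = sin (η t) ^ 2 - deriv η t ^ 2) (hw0 : w t ≠ 0)
    (hT : T t = (w t)⁻¹ • deriv α t) :
    mdot (T t) (T t) = -1 ∧ w t * mdot (T t) p = -(sin (η t) * deriv η t) := by
  have hγ'p : mdot (deriv γ t) p = 0 := by
    simpa [mdot] using mdot_deriv_add_mdot_deriv_eq_zero (hγ t) (differentiableAt_const p) hγp
  have hγ'γ : mdot (deriv γ t) (γ t) = 0 := by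
    linarith [mdot_deriv_add_mdot_deriv_eq_zero (hγ t) (hγ t) hγ1, mdot_comm (γ t) (deriv γ t)]
  obtain rfl : α = _ := funext hα
  rw [hT, (hasDerivAt_cos_smul_add_sin_smul p (hη t) (hγ t)).deriv]
  simp only [mdot_add_left, mdot_add_right, mdot_smul_left, mdot_smul_right, hp, hγ1, hγp,
    hγ', hγ'p, hγ'γ, mdot_comm p, mdot_comm (γ t) (deriv γ t)]
  constructor
  · field_simp
    linear_combination deriv η t ^ 2 * sin_sq_add_cos_sq (η t) + hw
  · field_simp
    ring

theorem sq_mul_sq_det_frame {T N : ℝ → Fin 4 → ℝ} {w : ℝ → ℝ}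
    (hp : mdot p p = 1) (hη : Differentiable ℝ η) (hγ : Differentiable ℝ γ)
    (hγ1 : ∀ u, mdot (γ u) (γ u) = 1) (hγp : ∀ u, mdot (γ u) p = 0)
    (hγ' : ∀ u, mdot (deriv γ u) (deriv γ u) = -1)
    (hα : ∀ u, α u = cos (η u) • p + sin (η u) • γ u) {t : ℝ}
    (hw : w t ^ 2 = sin (η t) ^ 2 - deriv η t ^ 2) (hw0 : w t ≠ 0)
    (hT : T t = (w t)⁻¹ • deriv α t) (hNN : mdot (N t) (N t) = 1)
    (hαT : mdot (α t) (T t) = 0) (hαN : mdot (α t) (N t) = 0) (hTN : mdot (T t) (N t) = 0) :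
    w t ^ 2 * (Matrix.of ![α t, T t, N t, p]).det ^ 2
      = sin (η t) ^ 4 - w t ^ 2 * mdot p (N t) ^ 2 := by
  obtain ⟨hαα, hαp⟩ : mdot (α t) (α t) = 1 ∧ mdot (α t) p = cos (η t) := by
    rw [hα]; exact mdot_cos_smul_add_sin_smul hp (hγ1 t) (hγp t) (η t)
  obtain ⟨hTT, hTp⟩ :=
    mdot_unitTangent_cos_smul_add_sin_smul hp hη hγ hγ1 hγp hγ' hα hw hw0 hT
  rw [sq_det_of_orthonormal p hαα hTT hNN hαT hαN hTN, hp, hαp, mdot_comm (N t)]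
  linear_combination -w t ^ 2 * sin_sq_add_cos_sq (η t)
    + (w t * mdot (T t) p - sin (η t) * deriv η t) * hTp + sin (η t) ^ 2 * hw

end CurveOverPseudoSphere

theorem det_derivs_of_frenet (p : Fin 4 → ℝ) {α T N : ℝ → Fin 4 → ℝ} {w κ : ℝ → ℝ} {t : ℝ}
    (hw : ∀ u, w u ≠ 0) (hT : ∀ u, T u = (w u)⁻¹ • deriv α u)
    (hw_diff : DifferentiableAt ℝ w t) (hα_diff : DifferentiableAt ℝ (deriv α) t)
    (hT' : deriv T t = w t • (α t + κ t • N t)) :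
    (Matrix.of ![α t, deriv α t, deriv (deriv α) t, p]).det
      = w t ^ 3 * κ t * (Matrix.of ![α t, T t, N t, p]).det := by
  have hα' : deriv α = w • T := funext fun u => by rw [Pi.smul_apply', hT, smul_inv_smul₀ (hw u)]
  have hT_diff : DifferentiableAt ℝ T t := by
    rw [funext hT]; exact (hw_diff.inv (hw t)).smul hα_diff
  have hα'' : deriv (deriv α) t = w t • deriv T t + deriv w t • T t := by
    rw [hα']; exact (hw_diff.hasDerivAt.smul hT_diff.hasDerivAt).deriv
  rw [det_of_triangular_rows (x := α t) (y := T t) (z := N t) (a₁ := 0) (b₁ := 1) (a₂ := 0)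
    (b₂ := 0) (c₂ := w t) (a₃ := 0) (b₃ := w t ^ 2) (c₃ := deriv w t) (d₃ := w t ^ 2 * κ t)
    (by module) (by rw [hα', Pi.smul_apply']; module) (by rw [hα'', hT']; module)]
  ring

theorem extremal_equality_iff_rectifying_general
    (p : Fin 4 → ℝ) (hp : mdot p p = 1)
    (γ : ℝ → Fin 4 → ℝ) (hγsm : ContDiff ℝ (⊤ : ℕ∞) γ)
    (hγ1 : ∀ t, mdot (γ t) (γ t) = 1)
    (hγp : ∀ t, mdot (γ t) p = 0)
    (hγ' : ∀ t, mdot (deriv γ t) (deriv γ t) = -1)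
    (η : ℝ → ℝ) (hηsm : ContDiff ℝ (⊤ : ℕ∞) η)
    (htimelike : ∀ t, (deriv η t) ^ 2 < Real.sin (η t) ^ 2)
    (w : ℝ → ℝ)
    (hw : ∀ t, w t = Real.sqrt (Real.sin (η t) ^ 2 - (deriv η t) ^ 2))
    (α : ℝ → Fin 4 → ℝ)
    (hα : ∀ t, α t = Real.cos (η t) • p + Real.sin (η t) • γ t)
    (T : ℝ → Fin 4 → ℝ) (hT : ∀ t, T t = (w t)⁻¹ • deriv α t)
    (N : ℝ → Fin 4 → ℝ)
    (κg : ℝ → ℝ)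
    (hκpos : ∀ t, 0 < κg t)
    (hN1 : ∀ t, mdot (N t) (N t) = 1)
    (hαT : ∀ t, mdot (α t) (T t) = 0)
    (hαN : ∀ t, mdot (α t) (N t) = 0)
    (hTN : ∀ t, mdot (T t) (N t) = 0)
    (hF1 : ∀ t, deriv T t = w t • (α t + κg t • N t))
    (κγ : ℝ → ℝ)
    (hκγ : ∀ t, κγ t = (Matrix.of ![γ t, deriv γ t, deriv (deriv γ) t, p]).det)
    :
    (∀ t, κγ t ^ 2 * Real.sin (η t) ^ 2 = w t ^ 4 * κg t ^ 2) ↔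
      (∀ t, mdot p (N t) = 0) := by
  have hη : ContDiff ℝ 2 η := hηsm.of_le (by decide)
  have hγ : ContDiff ℝ 2 γ := hγsm.of_le (by decide)
  have hα2 : ContDiff ℝ 2 α := by
    rw [funext hα]; fun_prop
  have hw_sq t : w t ^ 2 = sin (η t) ^ 2 - deriv η t ^ 2 := by
    rw [hw]; exact sq_sqrt (sub_pos.mpr (htimelike t)).le
  have hw_pos t : 0 < w t := by
    rw [hw]; exact sqrt_pos.mpr (sub_pos.mpr (htimelike t))
  have hw_diff t : DifferentiableAt ℝ w t := by
    rw [funext hw]; exact differentiableAt_sqrt_sin_sq_sub_deriv_sq hη (htimelike t)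
  have key t : sin (η t) ^ 4 * (κγ t ^ 2 * sin (η t) ^ 2 - w t ^ 4 * κg t ^ 2)
      = -(w t ^ 3 * κg t * mdot p (N t)) ^ 2 := by
    have hdet := (det_derivs_cos_smul_add_sin_smul hη hγ hα t).symm.trans
      (det_derivs_of_frenet p (fun u => (hw_pos u).ne') hT (hw_diff t)
        (hα2.differentiable_deriv_two t) (hF1 t))
    have hframe := sq_mul_sq_det_frame hp (hη.differentiable (by norm_num))
      (hγ.differentiable (by norm_num)) hγ1 hγp hγ' hα (hw_sq t) (hw_pos t).ne' (hT t) (hN1 t)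
      (hαT t) (hαN t) (hTN t)
    rw [hκγ]
    linear_combination (sin (η t) ^ 3 * (Matrix.of ![γ t, deriv γ t, deriv (deriv γ) t, p]).det
      + w t ^ 3 * κg t * (Matrix.of ![α t, T t, N t, p]).det) * hdet + w t ^ 4 * κg t ^ 2 * hframe
  refine forall_congr' fun t => ?_
  have hsin : sin (η t) ≠ 0 := sq_pos_iff.mp ((sq_nonneg _).trans_lt (htimelike t))
  rw [← sub_eq_zero, ← mul_right_inj' (pow_ne_zero 4 hsin), mul_zero, key t, neg_eq_zero]
  simp [(hw_pos t).ne', (hκpos t).ne']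

/-- Equality `κ_γ² sin²(η) = w⁴ κ_g²` holds identically iff `α` is a timelike
rectifying curve with respect to `p`. -/
theorem extremal_equality_iff_rectifying
    (p : Fin 4 → ℝ) (hp : mdot p p = 1)
    (γ : ℝ → Fin 4 → ℝ) (hγsm : ContDiff ℝ (⊤ : ℕ∞) γ)
    (hγ1 : ∀ t, mdot (γ t) (γ t) = 1)
    (hγp : ∀ t, mdot (γ t) p = 0)
    (hγ' : ∀ t, mdot (deriv γ t) (deriv γ t) = -1)
    (η : ℝ → ℝ) (hηsm : ContDiff ℝ (⊤ : ℕ∞) η)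
    (hsinpos : ∀ t, 0 < Real.sin (η t))
    (htimelike : ∀ t, (deriv η t) ^ 2 < Real.sin (η t) ^ 2)
    (w : ℝ → ℝ)
    (hw : ∀ t, w t = Real.sqrt (Real.sin (η t) ^ 2 - (deriv η t) ^ 2))
    (α : ℝ → Fin 4 → ℝ)
    (hα : ∀ t, α t = Real.cos (η t) • p + Real.sin (η t) • γ t)
    (T : ℝ → Fin 4 → ℝ) (hT : ∀ t, T t = (w t)⁻¹ • deriv α t)
    (N B : ℝ → Fin 4 → ℝ) (hNsm : ContDiff ℝ (⊤ : ℕ∞) N)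
    (hBsm : ContDiff ℝ (⊤ : ℕ∞) B)
    (κg τg : ℝ → ℝ) (hκsm : ContDiff ℝ (⊤ : ℕ∞) κg)
    (hτsm : ContDiff ℝ (⊤ : ℕ∞) τg)
    (hκpos : ∀ t, 0 < κg t)
    (hN1 : ∀ t, mdot (N t) (N t) = 1)
    (hB1 : ∀ t, mdot (B t) (B t) = 1)
    (hαT : ∀ t, mdot (α t) (T t) = 0)
    (hαN : ∀ t, mdot (α t) (N t) = 0)
    (hαB : ∀ t, mdot (α t) (B t) = 0)
    (hTN : ∀ t, mdot (T t) (N t) = 0)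
    (hTB : ∀ t, mdot (T t) (B t) = 0)
    (hNB : ∀ t, mdot (N t) (B t) = 0)
    (hF1 : ∀ t, deriv T t = w t • (α t + κg t • N t))
    (hF2 : ∀ t, deriv N t = w t • (κg t • T t + τg t • B t))
    (hF3 : ∀ t, deriv B t = -(w t * τg t) • N t)
    (κγ : ℝ → ℝ)
    (hκγ : ∀ t, κγ t = (Matrix.of ![γ t, deriv γ t, deriv (deriv γ) t, p]).det)
    :
    (∀ t, κγ t ^ 2 * Real.sin (η t) ^ 2 = w t ^ 4 * κg t ^ 2) ↔
      (∀ t, mdot p (N t) = 0) :=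
  extremal_equality_iff_rectifying_general p hp γ hγsm hγ1 hγp hγ' η hηsm htimelike w hw α hα T hT N
    κg hκpos hN1 hαT hαN hTN hF1 κγ hκγ
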